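/- arXiv:1604.07515 — 6 statements merged into one kernel-verified Lean document; each statement's English description precedes it below -/
import Mathlib

section
/- For every T ≥ 1, the total degree of all vertices pushed by the parallel PR-Nibble process with the optimized update rule over the first T iterations satisfies Σ_{i=1}^{T} Σ_{v ∈ A_i} d(v) ≤ 1/(α·ε). In particular, this bound is independent of T. -/
/-!
Every push keeps the residual nonnegative and sends only a fraction `(1-α)/(1+α)` of the pushed
residual to the neighbours, so the total residual drops by at least `2α/(1+α) ≥ α` times the
residual pushed. Starting from total residual `1`, the residual pushed over all rounds is thus at
most `1/α`, while each active vertex `v` pushes at least `ε·d(v)`.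
-/

open Finset

namespace SimpleGraph

variable {V : Type*} [Fintype V] {G : SimpleGraph V} [DecidableRel G.Adj]

-- Equality holds unless `v` is isolated, in which case nothing is sent.
lemma sum_adj_div_degree_le (v : V) {a : ℝ} (ha : 0 ≤ a) :
    ∑ w, (if G.Adj v w then a / (G.degree v : ℝ) else 0) ≤ a := by
  rw [← sum_filter, sum_const, ← neighborFinset_eq_filter, card_neighborFinset_eq_degree,
    nsmul_eq_mul]
  rcases (G.degree v).eq_zero_or_pos with h | h
  · simpa [h] using ha
  · rw [mul_div_cancel₀ _ (by positivity)]

variable [DecidableEq V] (G)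

noncomputable def prNibbleStep (c : ℝ) (A : Finset V) (r : V → ℝ) (w : V) : ℝ :=
  (if w ∈ A then 0 else r w) + ∑ v ∈ A, if G.Adj v w then c * r v / (G.degree v : ℝ) else 0

variable {G}

lemma prNibbleStep_nonneg {c : ℝ} (hc : 0 ≤ c) (A : Finset V) {r : V → ℝ} (hr : 0 ≤ r) :
    0 ≤ G.prNibbleStep c A r := fun w =>
  add_nonneg (by split_ifs; exacts [le_rfl, hr w])
    (sum_nonneg fun v _ => by
      split_ifs
      exacts [div_nonneg (mul_nonneg hc (hr v)) (Nat.cast_nonneg _), le_rfl])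

lemma sum_prNibbleStep_le {c : ℝ} (hc : 0 ≤ c) (A : Finset V) {r : V → ℝ} (hr : 0 ≤ r) :
    ∑ w, G.prNibbleStep c A r w ≤ ∑ w, r w - (1 - c) * ∑ v ∈ A, r v := by
  have hkept : ∑ w, (if w ∈ A then 0 else r w) = ∑ w, r w - ∑ v ∈ A, r v := by
    rw [eq_sub_iff_add_eq, ← univ_inter A, ← sum_ite_mem, univ_inter, ← sum_add_distrib]
    exact sum_congr rfl fun w _ => by split_ifs <;> simp
  have hsent : ∑ w, ∑ v ∈ A, (if G.Adj v w then c * r v / (G.degree v : ℝ) else 0)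
      ≤ c * ∑ v ∈ A, r v := by
    rw [sum_comm, mul_sum]
    exact sum_le_sum fun v _ => sum_adj_div_degree_le v (mul_nonneg hc (hr v))
  simp only [prNibbleStep, sum_add_distrib]
  linarith

end SimpleGraph

lemma sum_Icc_le_sub_of_le_sub {s p : ℕ → ℝ} (h : ∀ i, 1 ≤ i → s (i + 1) ≤ s i - p i)
    (T : ℕ) : ∑ i ∈ Icc 1 T, p i ≤ s 1 - s (T + 1) := by
  induction T with
  | zero => simp
  | succ T ih =>
    rw [sum_Icc_succ_top (by omega)]
    linarith [h (T + 1) (by omega)]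

theorem parallel_pr_nibble_optimized_work_bound_general
    {V : Type*} [Fintype V] [DecidableEq V] (G : SimpleGraph V) [DecidableRel G.Adj]
    (α ε : ℝ) (hα : α ∈ Set.Ioo (0 : ℝ) 1) (hε : 0 < ε)
    (x : V)
    (r : ℕ → V → ℝ) (A : ℕ → Finset V)
    (hinit : ∀ v : V, r 1 v = if v = x then 1 else 0)
    (hA : ∀ i, 1 ≤ i → ∀ v : V, v ∈ A i ↔ ε * (G.degree v : ℝ) ≤ r i v)
    (hrec : ∀ i, 1 ≤ i → ∀ w : V,
      r (i + 1) w = (if w ∈ A i then 0 else r i w)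
        + ∑ v ∈ A i, if G.Adj v w then
            ((1 - α) / (1 + α)) * r i v / (G.degree v : ℝ) else 0) :
    ∀ T : ℕ, 1 ≤ T →
      ∑ i ∈ Finset.Icc 1 T, ∑ v ∈ A i, (G.degree v : ℝ) ≤ 1 / (α * ε) := by
  obtain ⟨hα0, hα1⟩ := hα
  set c := (1 - α) / (1 + α)
  have hc : 0 ≤ c := div_nonneg (by linarith) (by linarith)
  have hstep : ∀ i, 1 ≤ i → r (i + 1) = G.prNibbleStep c (A i) (r i) :=
    fun i hi => funext (hrec i hi)
  have hnonneg : ∀ i, 1 ≤ i → 0 ≤ r i := by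
    intro i hi
    induction i, hi using Nat.le_induction with
    | base => intro v; rw [hinit]; split_ifs <;> norm_num
    | succ i hi ih => rw [hstep i hi]; exact SimpleGraph.prNibbleStep_nonneg hc _ ih
  intro T _
  have hpushed := sum_Icc_le_sub_of_le_sub (s := fun i => ∑ w, r i w)
    (p := fun i => (1 - c) * ∑ v ∈ A i, r i v)
    (fun i hi => hstep i hi ▸ SimpleGraph.sum_prNibbleStep_le hc _ (hnonneg i hi)) T
  have hr1 : ∑ w, r 1 w = 1 := by simp [hinit]
  have hrT : 0 ≤ ∑ w, r (T + 1) w := sum_nonneg fun w _ => hnonneg (T + 1) (by omega) w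
  have hactive : ε * ∑ i ∈ Icc 1 T, ∑ v ∈ A i, (G.degree v : ℝ)
      ≤ ∑ i ∈ Icc 1 T, ∑ v ∈ A i, r i v := by
    simp only [mul_sum]
    exact sum_le_sum fun i hi => sum_le_sum fun v hv => (hA i (mem_Icc.mp hi).1 v).mp hv
  have hloss : α ≤ 1 - c := by
    rw [le_sub_comm, div_le_iff₀ (by linarith)]; nlinarith
  rw [← mul_sum] at hpushed
  set P := ∑ i ∈ Icc 1 T, ∑ v ∈ A i, r i v
  have hP : 0 ≤ P := sum_nonneg fun i hi => sum_nonneg fun v _ => hnonneg i (mem_Icc.mp hi).1 v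
  rw [le_div_iff₀ (by positivity)]
  calc _ = α * (ε * ∑ i ∈ Icc 1 T, ∑ v ∈ A i, (G.degree v : ℝ)) := by ring
    _ ≤ α * P := by gcongr
    _ ≤ (1 - c) * P := by gcongr
    _ ≤ 1 := by linarith

/-- **Parallel PR-Nibble (optimized update rule), work bound.**
Let `G` be a finite simple undirected graph in which every vertex has positive degree.
Fix `α ∈ (0,1)`, `ε > 0` and a seed vertex `x`. The parallel PR-Nibble process with the
optimized update rule defines residuals `r 1 = 𝟙_x`, active sets
`A i = {v : r i v ≥ ε·d(v)}`, and
`r (i+1) w = (if w ∈ A i then 0 else r i w) + Σ_{v ∈ A i, {v,w} ∈ E} ((1-α)/(1+α))·r i v / d(v)`.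
Then for every `T ≥ 1`, `Σ_{i=1}^{T} Σ_{v ∈ A i} d(v) ≤ 1/(α·ε)`. -/
theorem parallel_pr_nibble_optimized_work_bound
    {V : Type*} [Fintype V] [DecidableEq V] (G : SimpleGraph V) [DecidableRel G.Adj]
    (hd : ∀ v : V, 0 < G.degree v)
    (α ε : ℝ) (hα : α ∈ Set.Ioo (0 : ℝ) 1) (hε : 0 < ε)
    (x : V)
    (r : ℕ → V → ℝ) (A : ℕ → Finset V)
    (hinit : ∀ v : V, r 1 v = if v = x then 1 else 0)
    (hA : ∀ i, 1 ≤ i → ∀ v : V, v ∈ A i ↔ ε * (G.degree v : ℝ) ≤ r i v)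
    (hrec : ∀ i, 1 ≤ i → ∀ w : V,
      r (i + 1) w = (if w ∈ A i then 0 else r i w)
        + ∑ v ∈ A i, if G.Adj v w then
            ((1 - α) / (1 + α)) * r i v / (G.degree v : ℝ) else 0) :
    ∀ T : ℕ, 1 ≤ T →
      ∑ i ∈ Finset.Icc 1 T, ∑ v ∈ A i, (G.degree v : ℝ) ≤ 1 / (α * ε) :=
  parallel_pr_nibble_optimized_work_bound_general G α ε hα hε x r A hinit hA hrec
end

section
/- For every T ≥ 1, the total degree of all vertices pushed by the parallel PR-Nibble process with the original update rule over the first T iterations satisfies Σ_{i=1}^{T} Σ_{v ∈ A_i} d(v) ≤ 1/(α·ε). In particular, this bound is independent of T. -/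
/-!
Every push at a vertex `v` keeps `(1 - α)/2` of its residual at `v` and spreads at most
another `(1 - α)/2` of it to the neighbours, so it destroys at least `α · r(v) ≥ α ε d(v)` of
the total residual mass. Residuals stay nonnegative and the initial mass is `1`, so the total
degree pushed is at most `1/(α ε)`.
-/

open Finset

theorem Finset.sum_Ico_le_sub_of_add_le {M : Type*} [AddCommGroup M] [PartialOrder M]
    [IsOrderedAddMonoid M] {m c : ℕ → M} {a b : ℕ} (hab : a ≤ b)
    (h : ∀ i, a ≤ i → i < b → m (i + 1) + c i ≤ m i) :
    ∑ i ∈ Ico a b, c i ≤ m a - m b := by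
  induction b, hab using Nat.le_induction with
  | base => simp
  | succ b hab ih =>
    rw [sum_Ico_succ_top hab, le_sub_iff_add_le]
    calc ∑ i ∈ Ico a b, c i + c b + m (b + 1) = ∑ i ∈ Ico a b, c i + (m (b + 1) + c b) := by
          abel
      _ ≤ ∑ i ∈ Ico a b, c i + m b := by gcongr; exact h b hab (by omega)
      _ ≤ m a := le_sub_iff_add_le.mp (ih fun i hai hib => h i hai (by omega))

namespace SimpleGraph

variable {V : Type*} [Fintype V] {G : SimpleGraph V} [DecidableRel G.Adj]

-- `≤` rather than `=` because an isolated vertex spreads nothing (`c / 0 = 0`).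
theorem sum_adj_ite_div_degree_le {c : ℝ} (hc : 0 ≤ c) (v : V) :
    ∑ w, (if G.Adj v w then c / (G.degree v : ℝ) else 0) ≤ c := by
  rw [← sum_filter, ← neighborFinset_eq_filter, sum_const, card_neighborFinset_eq_degree,
    nsmul_eq_mul, mul_div_left_comm]
  exact mul_le_of_le_one_right hc (div_self_le_one _)

variable [DecidableEq V] (G)

noncomputable def prPush (α : ℝ) (S : Finset V) (r : V → ℝ) (w : V) : ℝ :=
  (if w ∈ S then (1 - α) * r w / 2 else r w) +
    ∑ v ∈ S, if G.Adj v w then ((1 - α) / 2) * r v / (G.degree v : ℝ) else 0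

variable {G}

theorem prPush_nonneg {α : ℝ} (hα : α ≤ 1) (S : Finset V) {r : V → ℝ} (hr : 0 ≤ r) :
    0 ≤ G.prPush α S r := by
  have h1α : 0 ≤ 1 - α := by linarith
  intro w
  have : 0 ≤ r w := hr w
  refine add_nonneg (by split_ifs <;> positivity) (sum_nonneg fun v _ => ?_)
  have : 0 ≤ r v := hr v
  split_ifs <;> positivity

theorem sum_prPush_le {α : ℝ} (hα : α ≤ 1) (S : Finset V) {r : V → ℝ} (hr : 0 ≤ r) :
    ∑ w, G.prPush α S r w ≤ ∑ w, r w - α * ∑ v ∈ S, r v := by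
  have h1α : 0 ≤ 1 - α := by linarith
  have hkept : ∑ w, (if w ∈ S then (1 - α) * r w / 2 else r w)
      = ∑ w, r w - ∑ v ∈ S, (1 + α) / 2 * r v := by
    rw [← Fintype.sum_ite_mem S, ← sum_sub_distrib]
    exact sum_congr rfl fun w _ => by split_ifs <;> ring
  have hspread : ∑ w, ∑ v ∈ S, (if G.Adj v w then ((1 - α) / 2) * r v / (G.degree v : ℝ) else 0)
      ≤ ∑ v ∈ S, (1 - α) / 2 * r v := by
    rw [sum_comm]
    refine sum_le_sum fun v _ => sum_adj_ite_div_degree_le ?_ v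
    have : 0 ≤ r v := hr v
    positivity
  calc ∑ w, G.prPush α S r w
      ≤ ∑ w, r w - ∑ v ∈ S, (1 + α) / 2 * r v + ∑ v ∈ S, (1 - α) / 2 * r v := by
        simp only [prPush]
        rw [sum_add_distrib, hkept]
        gcongr
    _ = ∑ w, r w - α * ∑ v ∈ S, r v := by
        rw [mul_sum, sub_add, ← sum_sub_distrib]
        exact congrArg _ (sum_congr rfl fun v _ => by ring)

end SimpleGraph

theorem parallel_pr_nibble_original_work_bound_general
    {V : Type*} [Fintype V] [DecidableEq V] (G : SimpleGraph V) [DecidableRel G.Adj]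
    (α ε : ℝ) (hα : α ∈ Set.Ioo (0 : ℝ) 1) (hε : 0 < ε)
    (x : V)
    (r : ℕ → V → ℝ) (A : ℕ → Finset V)
    (hinit : ∀ v : V, r 1 v = if v = x then 1 else 0)
    (hA : ∀ i, 1 ≤ i → ∀ v : V, v ∈ A i ↔ ε * (G.degree v : ℝ) ≤ r i v)
    (hrec : ∀ i, 1 ≤ i → ∀ w : V,
      r (i + 1) w = (if w ∈ A i then (1 - α) * r i w / 2 else r i w)
        + ∑ v ∈ A i, if G.Adj v w then
            ((1 - α) / 2) * r i v / (G.degree v : ℝ) else 0) :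
    ∀ T : ℕ, 1 ≤ T →
      ∑ i ∈ Finset.Icc 1 T, ∑ v ∈ A i, (G.degree v : ℝ) ≤ 1 / (α * ε) := by
  intro T _
  obtain ⟨hα0, hα1⟩ := hα
  have hpush : ∀ i, 1 ≤ i → r (i + 1) = G.prPush α (A i) (r i) := fun i hi => funext (hrec i hi)
  have hnonneg : ∀ i, 1 ≤ i → 0 ≤ r i := by
    refine Nat.le_induction (fun v => ?_) fun i hi ih => ?_
    · rw [hinit]; split_ifs <;> norm_num
    · rw [hpush i hi]; exact SimpleGraph.prPush_nonneg hα1.le _ ih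
  have hdecay : ∀ i, 1 ≤ i →
      ∑ w, r (i + 1) w + α * ε * ∑ v ∈ A i, (G.degree v : ℝ) ≤ ∑ w, r i w := by
    intro i hi
    have hpushed : ε * ∑ v ∈ A i, (G.degree v : ℝ) ≤ ∑ v ∈ A i, r i v := by
      rw [mul_sum]
      exact sum_le_sum fun v hv => (hA i hi v).mp hv
    have hmass := SimpleGraph.sum_prPush_le (G := G) hα1.le (A i) (hnonneg i hi)
    rw [hpush i hi]
    linarith [mul_le_mul_of_nonneg_left hpushed hα0.le]
  have hmass₁ : ∑ w, r 1 w = 1 := by simp [hinit]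
  have hmass_nonneg : 0 ≤ ∑ w, r (T + 1) w := sum_nonneg fun w _ => hnonneg (T + 1) (by omega) w
  have htotal := sum_Ico_le_sub_of_add_le (m := fun i => ∑ w, r i w)
    (c := fun i => α * ε * ∑ v ∈ A i, (G.degree v : ℝ)) (Nat.le_add_left 1 T)
    fun i hi _ => hdecay i hi
  rw [Finset.Ico_add_one_right_eq_Icc, ← mul_sum, hmass₁] at htotal
  rw [le_div_iff₀ (by positivity)]
  linarith

/-- **Parallel PR-Nibble (original update rule), work bound.**
Residuals: `r 1 = 𝟙_x`, `A i = {v : r i v ≥ ε·d(v)}`, and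
`r (i+1) w = (if w ∈ A i then (1-α)·r i w/2 else r i w)
  + Σ_{v ∈ A i, {v,w} ∈ E} ((1-α)/2)·r i v / d(v)`.
Then for every `T ≥ 1`, `Σ_{i=1}^{T} Σ_{v ∈ A i} d(v) ≤ 1/(α·ε)`. -/
theorem parallel_pr_nibble_original_work_bound
    {V : Type*} [Fintype V] [DecidableEq V] (G : SimpleGraph V) [DecidableRel G.Adj]
    (hd : ∀ v : V, 0 < G.degree v)
    (α ε : ℝ) (hα : α ∈ Set.Ioo (0 : ℝ) 1) (hε : 0 < ε)
    (x : V)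
    (r : ℕ → V → ℝ) (A : ℕ → Finset V)
    (hinit : ∀ v : V, r 1 v = if v = x then 1 else 0)
    (hA : ∀ i, 1 ≤ i → ∀ v : V, v ∈ A i ↔ ε * (G.degree v : ℝ) ≤ r i v)
    (hrec : ∀ i, 1 ≤ i → ∀ w : V,
      r (i + 1) w = (if w ∈ A i then (1 - α) * r i w / 2 else r i w)
        + ∑ v ∈ A i, if G.Adj v w then
            ((1 - α) / 2) * r i v / (G.degree v : ℝ) else 0) :
    ∀ T : ℕ, 1 ≤ T →
      ∑ i ∈ Finset.Icc 1 T, ∑ v ∈ A i, (G.degree v : ℝ) ≤ 1 / (α * ε) :=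
  parallel_pr_nibble_original_work_bound_general G α ε hα hε x r A hinit hA hrec
end

section
/- For every iteration i of the parallel PR-Nibble process with the optimized update rule, the total residual mass decreases by exactly the mass moved to the PageRank vector: Σ_{v∈V} r_i(v) − Σ_{v∈V} r_{i+1}(v) = (2α/(1+α))·Σ_{v ∈ A_i} r_i(v); consequently, Σ_{v∈V} r_i(v) − Σ_{v∈V} r_{i+1}(v) ≥ α·ε·Σ_{v ∈ A_i} d(v). -/
/-! Each active vertex gives up its whole residual and spreads the fraction `(1 - α)/(1 + α)` of it
evenly over its neighbours, so the total residual drops by `1 - (1 - α)/(1 + α) = 2α/(1 + α)` times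
the active mass. Active vertices carry at least `ε·d(v)` each, and `2α/(1 + α) ≥ α` on `[0, 1]`. -/

open Finset

namespace SimpleGraph

variable {V : Type*} [Fintype V] (G : SimpleGraph V) [DecidableRel G.Adj]

noncomputable def pushStep [DecidableEq V] (β : ℝ) (A : Finset V) (r : V → ℝ) (w : V) : ℝ :=
  (if w ∈ A then 0 else r w) + ∑ v ∈ A, if G.Adj v w then β * r v / (G.degree v : ℝ) else 0

theorem sum_ite_adj_div_degree {v : V} (hv : G.degree v ≠ 0) (c : ℝ) :
    ∑ w, (if G.Adj v w then c / (G.degree v : ℝ) else 0) = c := by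
  rw [sum_ite, sum_const, sum_const_zero, add_zero, ← neighborFinset_eq_filter,
    card_neighborFinset_eq_degree, nsmul_eq_mul, mul_div_cancel₀ _ (Nat.cast_ne_zero.mpr hv)]

theorem sum_pushStep [DecidableEq V] (β : ℝ) (A : Finset V) (r : V → ℝ)
    (hA : ∀ v ∈ A, G.degree v ≠ 0) :
    ∑ w, G.pushStep β A r w = ∑ w, r w - (1 - β) * ∑ v ∈ A, r v := by
  have hkept : ∑ w, (if w ∈ A then 0 else r w) = ∑ w, r w - ∑ v ∈ A, r v := by
    rw [eq_sub_iff_add_eq, ← sum_filter_not_add_sum_filter univ (· ∈ A) r, sum_ite,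
      sum_const_zero, zero_add, filter_mem_eq_inter, univ_inter]
  have hsent : ∑ w, ∑ v ∈ A, (if G.Adj v w then β * r v / (G.degree v : ℝ) else 0)
      = β * ∑ v ∈ A, r v := by
    rw [sum_comm, mul_sum]
    exact sum_congr rfl fun v hv => G.sum_ite_adj_div_degree (hA v hv) _
  simp only [pushStep, sum_add_distrib, hkept, hsent]
  ring

end SimpleGraph

theorem le_two_mul_div_one_add {α : ℝ} (h0 : 0 ≤ α) (h1 : α ≤ 1) : α ≤ 2 * α / (1 + α) := by
  rw [le_div_iff₀ (by linarith)]
  nlinarith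

theorem parallel_pr_nibble_optimized_mass_decrease_general
    {V : Type*} [Fintype V] [DecidableEq V] (G : SimpleGraph V) [DecidableRel G.Adj]
    (hd : ∀ v : V, 0 < G.degree v)
    (α ε : ℝ) (hα : α ∈ Set.Ioo (0 : ℝ) 1) (hε : 0 < ε)
    (r : ℕ → V → ℝ) (A : ℕ → Finset V)
    (hA : ∀ i, 1 ≤ i → ∀ v : V, v ∈ A i ↔ ε * (G.degree v : ℝ) ≤ r i v)
    (hrec : ∀ i, 1 ≤ i → ∀ w : V,
      r (i + 1) w = (if w ∈ A i then 0 else r i w)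
        + ∑ v ∈ A i, if G.Adj v w then
            ((1 - α) / (1 + α)) * r i v / (G.degree v : ℝ) else 0) :
    ∀ i, 1 ≤ i →
      ((∑ v, r i v) - (∑ v, r (i + 1) v)
          = (2 * α / (1 + α)) * ∑ v ∈ A i, r i v) ∧
      ((∑ v, r i v) - (∑ v, r (i + 1) v)
          ≥ α * ε * ∑ v ∈ A i, (G.degree v : ℝ)) := by
  obtain ⟨hα0, hα1⟩ := hα
  intro i hi
  have heq : (∑ v, r i v) - (∑ v, r (i + 1) v) = (2 * α / (1 + α)) * ∑ v ∈ A i, r i v := by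
    have hstep : r (i + 1) = G.pushStep ((1 - α) / (1 + α)) (A i) (r i) := funext (hrec i hi)
    rw [hstep, G.sum_pushStep _ _ _ fun v _ => (hd v).ne']
    field_simp
    ring
  have hmass : ε * ∑ v ∈ A i, (G.degree v : ℝ) ≤ ∑ v ∈ A i, r i v := by
    rw [mul_sum]
    exact sum_le_sum fun v hv => (hA i hi v).mp hv
  have hmass_nonneg : 0 ≤ ∑ v ∈ A i, r i v :=
    (mul_nonneg hε.le (sum_nonneg fun v _ => Nat.cast_nonneg _)).trans hmass
  refine ⟨heq, ?_⟩
  calc α * ε * ∑ v ∈ A i, (G.degree v : ℝ)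
      ≤ α * ∑ v ∈ A i, r i v := by
        rw [mul_assoc]; exact mul_le_mul_of_nonneg_left hmass hα0.le
    _ ≤ (2 * α / (1 + α)) * ∑ v ∈ A i, r i v :=
        mul_le_mul_of_nonneg_right (le_two_mul_div_one_add hα0.le hα1.le) hmass_nonneg
    _ = _ := heq.symm

/-- **Parallel PR-Nibble (optimized update rule), per-iteration mass decrease.**
For every iteration `i ≥ 1`,
`Σ_v r i v − Σ_v r (i+1) v = (2α/(1+α))·Σ_{v ∈ A i} r i v`, and consequently
`Σ_v r i v − Σ_v r (i+1) v ≥ α·ε·Σ_{v ∈ A i} d(v)`. -/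
theorem parallel_pr_nibble_optimized_mass_decrease
    {V : Type*} [Fintype V] [DecidableEq V] (G : SimpleGraph V) [DecidableRel G.Adj]
    (hd : ∀ v : V, 0 < G.degree v)
    (α ε : ℝ) (hα : α ∈ Set.Ioo (0 : ℝ) 1) (hε : 0 < ε)
    (x : V)
    (r : ℕ → V → ℝ) (A : ℕ → Finset V)
    (hinit : ∀ v : V, r 1 v = if v = x then 1 else 0)
    (hA : ∀ i, 1 ≤ i → ∀ v : V, v ∈ A i ↔ ε * (G.degree v : ℝ) ≤ r i v)
    (hrec : ∀ i, 1 ≤ i → ∀ w : V,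
      r (i + 1) w = (if w ∈ A i then 0 else r i w)
        + ∑ v ∈ A i, if G.Adj v w then
            ((1 - α) / (1 + α)) * r i v / (G.degree v : ℝ) else 0) :
    ∀ i, 1 ≤ i →
      ((∑ v, r i v) - (∑ v, r (i + 1) v)
          = (2 * α / (1 + α)) * ∑ v ∈ A i, r i v) ∧
      ((∑ v, r i v) - (∑ v, r (i + 1) v)
          ≥ α * ε * ∑ v ∈ A i, (G.degree v : ℝ)) :=
  parallel_pr_nibble_optimized_mass_decrease_general G hd α ε hα hε r A hA hrec
end

section
/- For every iteration i of the parallel PR-Nibble process with the original update rule, the total residual mass decreases by exactly Σ_{v∈V} r_i(v) − Σ_{v∈V} r_{i+1}(v) = α·Σ_{v ∈ A_i} r_i(v); consequently, Σ_{v∈V} r_i(v) − Σ_{v∈V} r_{i+1}(v) ≥ α·ε·Σ_{v ∈ A_i} d(v). -/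
/-!
An active vertex `v` keeps `(1 - α)/2 · r(v)` and sends `(1 - α)/2 · r(v)/d(v)` along each of its
`d(v)` edges, so exactly `α · r(v)` leaves the system, while inactive vertices lose nothing. The
inequality then follows from `r(v) ≥ ε · d(v)` on the active set.
-/

open Finset

namespace SimpleGraph

variable {V : Type*} [Fintype V] (G : SimpleGraph V) [DecidableRel G.Adj]

noncomputable def originalPushStep [DecidableEq V] (α : ℝ) (S : Finset V) (r : V → ℝ)
    (w : V) : ℝ :=
  (if w ∈ S then (1 - α) * r w / 2 else r w)
    + ∑ v ∈ S, if G.Adj v w then ((1 - α) / 2) * r v / (G.degree v : ℝ) else 0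

theorem sum_originalPushStep [DecidableEq V] {α : ℝ} {S : Finset V}
    (hS : ∀ v ∈ S, G.degree v ≠ 0) (r : V → ℝ) :
    ∑ w, G.originalPushStep α S r w = ∑ w, r w - α * ∑ v ∈ S, r v := by
  have h_spread : ∑ w, ∑ v ∈ S,
      (if G.Adj v w then ((1 - α) / 2) * r v / (G.degree v : ℝ) else 0)
        = (1 - α) / 2 * ∑ v ∈ S, r v := by
    rw [sum_comm, mul_sum]
    exact sum_congr rfl fun v hv => G.sum_ite_adj_div_degree (hS v hv) _
  have h_keep : ∑ w, (if w ∈ S then (1 - α) * r w / 2 else r w)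
      = (1 - α) / 2 * ∑ v ∈ S, r v + ∑ w ∈ Sᶜ, r w := by
    rw [sum_ite, mul_sum]
    congr 1
    · simp only [filter_mem_eq_inter, univ_inter]
      exact sum_congr rfl fun w _ => by ring
    · rw [filter_not, filter_mem_eq_inter, univ_inter, compl_eq_univ_sdiff]
  rw [← sum_add_sum_compl S r]
  simp only [originalPushStep]
  rw [sum_add_distrib, h_keep, h_spread]
  ring

end SimpleGraph

theorem parallel_pr_nibble_original_mass_decrease_general
    {V : Type*} [Fintype V] [DecidableEq V] (G : SimpleGraph V) [DecidableRel G.Adj]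
    (hd : ∀ v : V, 0 < G.degree v)
    (α ε : ℝ) (hα : α ∈ Set.Ioo (0 : ℝ) 1)
    (r : ℕ → V → ℝ) (A : ℕ → Finset V)
    (hA : ∀ i, 1 ≤ i → ∀ v : V, v ∈ A i ↔ ε * (G.degree v : ℝ) ≤ r i v)
    (hrec : ∀ i, 1 ≤ i → ∀ w : V,
      r (i + 1) w = (if w ∈ A i then (1 - α) * r i w / 2 else r i w)
        + ∑ v ∈ A i, if G.Adj v w then
            ((1 - α) / 2) * r i v / (G.degree v : ℝ) else 0) :
    ∀ i, 1 ≤ i →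
      ((∑ v, r i v) - (∑ v, r (i + 1) v) = α * ∑ v ∈ A i, r i v) ∧
      ((∑ v, r i v) - (∑ v, r (i + 1) v)
          ≥ α * ε * ∑ v ∈ A i, (G.degree v : ℝ)) := by
  intro i hi
  have h_step : r (i + 1) = G.originalPushStep α (A i) (r i) := funext (hrec i hi)
  have h_mass : (∑ v, r i v) - (∑ v, r (i + 1) v) = α * ∑ v ∈ A i, r i v := by
    rw [h_step, G.sum_originalPushStep (fun v _ => (hd v).ne')]
    ring
  refine ⟨h_mass, ?_⟩
  rw [h_mass, ge_iff_le, mul_assoc, mul_sum]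
  exact mul_le_mul_of_nonneg_left (sum_le_sum fun v hv => (hA i hi v).mp hv) hα.1.le

/-- **Parallel PR-Nibble (original update rule), per-iteration mass decrease.**
For every iteration `i ≥ 1`,
`Σ_v r i v − Σ_v r (i+1) v = α·Σ_{v ∈ A i} r i v`, and consequently
`Σ_v r i v − Σ_v r (i+1) v ≥ α·ε·Σ_{v ∈ A i} d(v)`. -/
theorem parallel_pr_nibble_original_mass_decrease
    {V : Type*} [Fintype V] [DecidableEq V] (G : SimpleGraph V) [DecidableRel G.Adj]
    (hd : ∀ v : V, 0 < G.degree v)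
    (α ε : ℝ) (hα : α ∈ Set.Ioo (0 : ℝ) 1) (hε : 0 < ε)
    (x : V)
    (r : ℕ → V → ℝ) (A : ℕ → Finset V)
    (hinit : ∀ v : V, r 1 v = if v = x then 1 else 0)
    (hA : ∀ i, 1 ≤ i → ∀ v : V, v ∈ A i ↔ ε * (G.degree v : ℝ) ≤ r i v)
    (hrec : ∀ i, 1 ≤ i → ∀ w : V,
      r (i + 1) w = (if w ∈ A i then (1 - α) * r i w / 2 else r i w)
        + ∑ v ∈ A i, if G.Adj v w then
            ((1 - α) / 2) * r i v / (G.degree v : ℝ) else 0) :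
    ∀ i, 1 ≤ i →
      ((∑ v, r i v) - (∑ v, r (i + 1) v) = α * ∑ v ∈ A i, r i v) ∧
      ((∑ v, r i v) - (∑ v, r (i + 1) v)
          ≥ α * ε * ∑ v ∈ A i, (G.degree v : ℝ)) :=
  parallel_pr_nibble_original_mass_decrease_general G hd α ε hα r A hA hrec
end

section
/- The parallel PR-Nibble process with the optimized update rule conserves total mass between the PageRank vector and the residual vector: for every i ≥ 1, Σ_{v∈V} p_i(v) + Σ_{v∈V} r_i(v) = 1, and both p_i and r_i are entrywise nonnegative. -/
/-!
One round of the process takes the residual mass `r v` off every active vertex `v`, sends the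
fraction `2α/(1+α)` of it to the PageRank vector and spreads the remaining fraction
`(1-α)/(1+α)` evenly over the `d(v)` neighbours of `v`. Since the two fractions add up to `1`
and are nonnegative, each round preserves both the total mass and nonnegativity.
-/

namespace PRNibble

open Finset

variable {V : Type*}

noncomputable def pushResidual [Fintype V] [DecidableEq V] (G : SimpleGraph V)
    [DecidableRel G.Adj] (β : ℝ) (S : Finset V) (r : V → ℝ) (w : V) : ℝ :=
  (if w ∈ S then 0 else r w) + ∑ v ∈ S, if G.Adj v w then β * r v / (G.degree v : ℝ) else 0

def pushPageRank [DecidableEq V] (γ : ℝ) (S : Finset V) (r p : V → ℝ) (v : V) : ℝ :=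
  p v + if v ∈ S then γ * r v else 0

lemma sum_adj_div_degree [Fintype V] (G : SimpleGraph V) [DecidableRel G.Adj] {v : V}
    (hv : 0 < G.degree v) (c : ℝ) :
    ∑ w, (if G.Adj v w then c / (G.degree v : ℝ) else 0) = c := by
  rw [← sum_filter, sum_const, ← SimpleGraph.neighborFinset_eq_filter,
    SimpleGraph.card_neighborFinset_eq_degree, nsmul_eq_mul,
    mul_div_cancel₀ _ (Nat.cast_ne_zero.mpr hv.ne')]

lemma sum_pushResidual [Fintype V] [DecidableEq V] (G : SimpleGraph V) [DecidableRel G.Adj]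
    (β : ℝ) {S : Finset V} (hS : ∀ v ∈ S, 0 < G.degree v) (r : V → ℝ) :
    ∑ w, pushResidual G β S r w = ∑ w, r w - ∑ v ∈ S, r v + β * ∑ v ∈ S, r v := by
  have hkept : ∑ w, (if w ∈ S then 0 else r w) = ∑ w, r w - ∑ v ∈ S, r v := by
    rw [sum_ite, sum_const_zero, zero_add, filter_not, filter_mem_eq_inter, univ_inter,
      sum_sdiff_eq_sub (subset_univ S)]
  have hspread : ∑ w, ∑ v ∈ S, (if G.Adj v w then β * r v / (G.degree v : ℝ) else 0)
      = β * ∑ v ∈ S, r v := by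
    rw [sum_comm, mul_sum]
    exact sum_congr rfl fun v hv => sum_adj_div_degree G (hS v hv) _
  simp only [pushResidual, sum_add_distrib, hkept, hspread]

lemma sum_pushPageRank [Fintype V] [DecidableEq V] (γ : ℝ) (S : Finset V) (r p : V → ℝ) :
    ∑ v, pushPageRank γ S r p v = ∑ v, p v + γ * ∑ v ∈ S, r v := by
  simp only [pushPageRank, sum_add_distrib, sum_ite_mem, univ_inter, mul_sum]

lemma sum_pushPageRank_add_sum_pushResidual [Fintype V] [DecidableEq V] (G : SimpleGraph V)
    [DecidableRel G.Adj] {β γ : ℝ} (hβγ : γ + β = 1) {S : Finset V}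
    (hS : ∀ v ∈ S, 0 < G.degree v) (r p : V → ℝ) :
    ∑ v, pushPageRank γ S r p v + ∑ w, pushResidual G β S r w = ∑ v, p v + ∑ w, r w := by
  rw [sum_pushPageRank, sum_pushResidual G β hS]
  linear_combination (∑ v ∈ S, r v) * hβγ

lemma pushResidual_nonneg [Fintype V] [DecidableEq V] (G : SimpleGraph V) [DecidableRel G.Adj]
    {β : ℝ} (hβ : 0 ≤ β) (S : Finset V) {r : V → ℝ} (hr : 0 ≤ r) :
    0 ≤ pushResidual G β S r := fun w => by
  refine add_nonneg (by split_ifs; exacts [le_rfl, hr w]) (sum_nonneg fun v _ => ?_)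
  split_ifs
  · exact div_nonneg (mul_nonneg hβ (hr v)) (Nat.cast_nonneg _)
  · exact le_rfl

lemma pushPageRank_nonneg [DecidableEq V] {γ : ℝ} (hγ : 0 ≤ γ) (S : Finset V) {r p : V → ℝ}
    (hr : 0 ≤ r) (hp : 0 ≤ p) : 0 ≤ pushPageRank γ S r p := fun v => by
  refine add_nonneg (hp v) ?_
  split_ifs
  · exact mul_nonneg hγ (hr v)
  · exact le_rfl

end PRNibble

open PRNibble in
theorem parallel_pr_nibble_optimized_mass_conservation_general
    {V : Type*} [Fintype V] [DecidableEq V] (G : SimpleGraph V) [DecidableRel G.Adj]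
    (hd : ∀ v : V, 0 < G.degree v)
    (α : ℝ) (hα : α ∈ Set.Ioo (0 : ℝ) 1)
    (x : V)
    (r p : ℕ → V → ℝ) (A : ℕ → Finset V)
    (hrinit : ∀ v : V, r 1 v = if v = x then 1 else 0)
    (hpinit : ∀ v : V, p 1 v = 0)
    (hrrec : ∀ i, 1 ≤ i → ∀ w : V,
      r (i + 1) w = (if w ∈ A i then 0 else r i w)
        + ∑ v ∈ A i, if G.Adj v w then
            ((1 - α) / (1 + α)) * r i v / (G.degree v : ℝ) else 0)
    (hprec : ∀ i, 1 ≤ i → ∀ v : V,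
      p (i + 1) v = p i v + (if v ∈ A i then (2 * α / (1 + α)) * r i v else 0)) :
    ∀ i, 1 ≤ i →
      ((∑ v, p i v) + (∑ v, r i v) = 1) ∧
      (∀ v : V, 0 ≤ p i v) ∧
      (∀ v : V, 0 ≤ r i v) := by
  obtain ⟨hα0, hα1⟩ := hα
  have hsplit : 2 * α / (1 + α) + (1 - α) / (1 + α) = 1 := by
    field_simp
    ring
  have hγ : 0 ≤ 2 * α / (1 + α) := by positivity
  have hβ : 0 ≤ (1 - α) / (1 + α) := div_nonneg (by linarith) (by linarith)
  intro i hi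
  induction i, hi using Nat.le_induction with
  | base =>
    refine ⟨by simp [hpinit, hrinit], fun v => (hpinit v).ge, fun v => ?_⟩
    rw [hrinit]
    split_ifs <;> norm_num
  | succ i hi ih =>
    obtain ⟨hmass, hp, hr⟩ := ih
    rw [show r (i + 1) = pushResidual G _ (A i) (r i) from funext (hrrec i hi),
      show p (i + 1) = pushPageRank _ (A i) (r i) (p i) from funext (hprec i hi)]
    exact ⟨by rw [sum_pushPageRank_add_sum_pushResidual G hsplit (fun v _ => hd v), hmass],
      pushPageRank_nonneg hγ _ hr hp, pushResidual_nonneg G hβ _ hr⟩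

/-- **Parallel PR-Nibble (optimized update rule): conservation of mass.**
With PageRank vectors `p 1 = 0` and
`p (i+1) v = p i v + (if v ∈ A i then (2α/(1+α))·r i v else 0)`,
for every `i ≥ 1` we have `Σ_v p i v + Σ_v r i v = 1`, and both `p i` and
`r i` are entrywise nonnegative. -/
theorem parallel_pr_nibble_optimized_mass_conservation
    {V : Type*} [Fintype V] [DecidableEq V] (G : SimpleGraph V) [DecidableRel G.Adj]
    (hd : ∀ v : V, 0 < G.degree v)
    (α ε : ℝ) (hα : α ∈ Set.Ioo (0 : ℝ) 1) (hε : 0 < ε)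
    (x : V)
    (r p : ℕ → V → ℝ) (A : ℕ → Finset V)
    (hrinit : ∀ v : V, r 1 v = if v = x then 1 else 0)
    (hpinit : ∀ v : V, p 1 v = 0)
    (hA : ∀ i, 1 ≤ i → ∀ v : V, v ∈ A i ↔ ε * (G.degree v : ℝ) ≤ r i v)
    (hrrec : ∀ i, 1 ≤ i → ∀ w : V,
      r (i + 1) w = (if w ∈ A i then 0 else r i w)
        + ∑ v ∈ A i, if G.Adj v w then
            ((1 - α) / (1 + α)) * r i v / (G.degree v : ℝ) else 0)
    (hprec : ∀ i, 1 ≤ i → ∀ v : V,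
      p (i + 1) v = p i v + (if v ∈ A i then (2 * α / (1 + α)) * r i v else 0)) :
    ∀ i, 1 ≤ i →
      ((∑ v, p i v) + (∑ v, r i v) = 1) ∧
      (∀ v : V, 0 ≤ p i v) ∧
      (∀ v : V, 0 ≤ r i v) :=
  parallel_pr_nibble_optimized_mass_conservation_general G hd α hα x r p A hrinit hpinit hrrec hprec
end

section
/- In the deterministic heat kernel PageRank (HK-PR) process, the residual vectors are entrywise nonnegative; the total residual mass at each level satisfies Σ_{w∈V} r_{j+1}(w) ≤ (t/(j+1))·Σ_{v∈V} r_j(v); and consequently, for every j ≥ 0, Σ_{v∈V} r_j(v) ≤ t^j / j!. -/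
/-!
Pushing mass `f v` from `v` in equal shares `f v / d(v)` to the neighbours of `v` never creates
mass, so one HK-PR step multiplies the total residual by at most `t/(j+1)`; iterating from the
unit mass at the seed gives `t^j / j!`.
-/

open Finset

namespace SimpleGraph

variable {V : Type*} [Fintype V] (G : SimpleGraph V) [DecidableRel G.Adj]

noncomputable def pushFrom (S : Finset V) (f : V → ℝ) (w : V) : ℝ :=
  ∑ v ∈ S, if G.Adj v w then f v / G.degree v else 0

theorem pushFrom_nonneg (S : Finset V) {f : V → ℝ} (hf : ∀ v, 0 ≤ f v) (w : V) :
    0 ≤ G.pushFrom S f w :=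
  sum_nonneg fun v _ => by
    split_ifs
    · exact div_nonneg (hf v) (Nat.cast_nonneg _)
    · exact le_rfl

theorem sum_ite_adj_const (v : V) (c : ℝ) :
    ∑ w, (if G.Adj v w then c else 0) = G.degree v * c := by
  rw [← sum_filter, ← neighborFinset_eq_filter, sum_const, card_neighborFinset_eq_degree,
    nsmul_eq_mul]

/-- At an isolated vertex `f v / 0 = 0`: its mass is dropped rather than pushed. -/
theorem sum_pushFrom_le (S : Finset V) {f : V → ℝ} (hf : ∀ v, 0 ≤ f v) :
    ∑ w, G.pushFrom S f w ≤ ∑ v, f v := by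
  unfold pushFrom
  rw [sum_comm]
  calc ∑ v ∈ S, ∑ w, (if G.Adj v w then f v / G.degree v else 0)
      = ∑ v ∈ S, G.degree v * (f v / G.degree v) := by simp only [sum_ite_adj_const]
    _ ≤ ∑ v ∈ S, f v := sum_le_sum fun v _ => by
        rcases (G.degree v).eq_zero_or_pos with h | h
        · simpa [h] using hf v
        · rw [mul_div_cancel₀ _ (by positivity)]
    _ ≤ ∑ v, f v := sum_le_sum_of_subset_of_nonneg (subset_univ S) fun v _ _ => hf v

end SimpleGraph

theorem le_pow_div_factorial_of_le_mul {t : ℝ} (ht : 0 ≤ t) {m : ℕ → ℝ} (h₀ : m 0 ≤ 1)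
    (hstep : ∀ j : ℕ, m (j + 1) ≤ t / ((j : ℝ) + 1) * m j) (j : ℕ) :
    m j ≤ t ^ j / j.factorial := by
  induction j with
  | zero => simpa using h₀
  | succ j ih =>
    calc m (j + 1) ≤ t / ((j : ℝ) + 1) * m j := hstep j
      _ ≤ t / ((j : ℝ) + 1) * (t ^ j / j.factorial) := by gcongr
      _ = t ^ (j + 1) / (j + 1).factorial := by
        rw [Nat.factorial_succ, Nat.cast_mul, Nat.cast_succ, pow_succ, div_mul_div_comm,
          mul_comm t, mul_comm ((j : ℝ) + 1)]

theorem hk_pr_residual_mass_bounds_general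
    {V : Type*} [Fintype V] [DecidableEq V] (G : SimpleGraph V) [DecidableRel G.Adj]
    (t : ℝ) (ht : 0 < t) (x : V)
    (r : ℕ → V → ℝ) (A : ℕ → Finset V)
    (hinit : ∀ v : V, r 0 v = if v = x then 1 else 0)
    (hrec : ∀ j : ℕ, ∀ w : V,
      r (j + 1) w = ∑ v ∈ A j, if G.Adj v w then
          t * r j v / (((j : ℝ) + 1) * (G.degree v : ℝ)) else 0) :
    (∀ j : ℕ, ∀ v : V, 0 ≤ r j v) ∧
    (∀ j : ℕ, ∑ w, r (j + 1) w ≤ (t / ((j : ℝ) + 1)) * ∑ v, r j v) ∧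
    (∀ j : ℕ, ∑ v, r j v ≤ t ^ j / (Nat.factorial j : ℝ)) := by
  have hpush : ∀ j, r (j + 1) = G.pushFrom (A j) fun v => t / ((j : ℝ) + 1) * r j v := by
    intro j
    funext w
    simp only [hrec, SimpleGraph.pushFrom, mul_div_assoc, div_mul_div_comm]
  have hnonneg : ∀ j v, 0 ≤ r j v := by
    intro j
    induction j with
    | zero => intro v; rw [hinit]; split_ifs <;> norm_num
    | succ j ih =>
      rw [hpush]
      exact G.pushFrom_nonneg _ fun v => mul_nonneg (by positivity) (ih v)
  have hmass : ∀ j : ℕ, ∑ w, r (j + 1) w ≤ (t / ((j : ℝ) + 1)) * ∑ v, r j v := by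
    intro j
    rw [hpush, mul_sum]
    exact G.sum_pushFrom_le _ fun v => mul_nonneg (by positivity) (hnonneg j v)
  refine ⟨hnonneg, hmass, le_pow_div_factorial_of_le_mul ht.le ?_ hmass⟩
  simp [hinit]

/-- **Deterministic heat kernel PageRank (HK-PR): residual mass bounds.**
With `r 0 = 𝟙_x` and, for an arbitrary sequence of push sets `A j ⊆ V`,
`r (j+1) w = Σ_{v ∈ A j, {v,w} ∈ E} t·r j v / ((j+1)·d v)`, the residuals are
entrywise nonnegative; `Σ_w r (j+1) w ≤ (t/(j+1))·Σ_v r j v` for every `j`;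
and consequently `Σ_v r j v ≤ t^j / j!` for every `j ≥ 0`. -/
theorem hk_pr_residual_mass_bounds
    {V : Type*} [Fintype V] [DecidableEq V] (G : SimpleGraph V) [DecidableRel G.Adj]
    (hd : ∀ v : V, 0 < G.degree v)
    (t : ℝ) (ht : 0 < t) (x : V)
    (r : ℕ → V → ℝ) (A : ℕ → Finset V)
    (hinit : ∀ v : V, r 0 v = if v = x then 1 else 0)
    (hrec : ∀ j : ℕ, ∀ w : V,
      r (j + 1) w = ∑ v ∈ A j, if G.Adj v w then
          t * r j v / (((j : ℝ) + 1) * (G.degree v : ℝ)) else 0) :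
    (∀ j : ℕ, ∀ v : V, 0 ≤ r j v) ∧
    (∀ j : ℕ, ∑ w, r (j + 1) w ≤ (t / ((j : ℝ) + 1)) * ∑ v, r j v) ∧
    (∀ j : ℕ, ∑ v, r j v ≤ t ^ j / (Nat.factorial j : ℝ)) :=
  hk_pr_residual_mass_bounds_general G t ht x r A hinit hrec
end
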